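/- Every 2-regular time-like curve γ : I → 𝕃⁴ parametrized by proper time admits a generalized Bishop frame of type D. -/

import Mathlib

/-!
Write `T = γ'`. Differentiating `⟨T, T⟩ = -1` shows that `T'` is orthogonal to `T`, hence
space-like, so 2-regularity gives `T' = κ Z₁` with `κ = |T'|` smooth and `Z₁` a smooth unit
space-like field orthogonal to `T`. Put `W = Z₁'`, so `⟨W, Z₁⟩ = 0` and `⟨W, T⟩ = -κ`. The operator
`A X = ⟨Z₁, X⟩ W - ⟨W, X⟩ Z₁` is skew for the Minkowski form, and both `T` and `Z₁` solve
`X' = A X`. Solving the same linear equation from an orthonormal completion of `T, Z₁` at one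
point gives `Z₂, Z₃`; skewness keeps every Minkowski product between solutions constant, so
`(T, Z₁, Z₂, Z₃)` stays orthonormal, and `Zᵢ' = A Zᵢ = -⟨W, Zᵢ⟩ Z₁` since `Zᵢ ⊥ Z₁`. Expanding `W`
in this frame gives `Z₁' = κ T + x₂ Z₂ + x₃ Z₃`.

The linear equation is solvable on all of the open interval `I`: on a compact subinterval the
coefficients are bounded, so Picard–Lindelöf gives solutions over a time step that does not depend
on the initial point, and these chain together; uniqueness glues the solutions on the subintervals.
-/

open Set Real

noncomputable section

/-- The Minkowski form on `ℝ⁴ = 𝕃⁴`: `⟨x,y⟩ = -x₀y₀ + x₁y₁ + x₂y₂ + x₃y₃`. -/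
def mink (x y : Fin 4 → ℝ) : ℝ :=
  -(x 0 * y 0) + x 1 * y 1 + x 2 * y 2 + x 3 * y 3

/-- `(T, Z₁, Z₂, Z₃)` is an orthonormal frame along a time-like curve with tangent `T`:
the `Zᵢ` are smooth on `I`, pairwise orthonormal (space-like) and orthogonal to `T`. -/
def OrthFrame (I : Set ℝ) (T Z₁ Z₂ Z₃ : ℝ → Fin 4 → ℝ) : Prop :=
  ContDiffOn ℝ (⊤ : ℕ∞) Z₁ I ∧ ContDiffOn ℝ (⊤ : ℕ∞) Z₂ I ∧ ContDiffOn ℝ (⊤ : ℕ∞) Z₃ I ∧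
  ∀ s ∈ I,
    mink (Z₁ s) (Z₁ s) = 1 ∧ mink (Z₂ s) (Z₂ s) = 1 ∧ mink (Z₃ s) (Z₃ s) = 1 ∧
    mink (Z₁ s) (Z₂ s) = 0 ∧ mink (Z₁ s) (Z₃ s) = 0 ∧ mink (Z₂ s) (Z₃ s) = 0 ∧
    mink (T s) (Z₁ s) = 0 ∧ mink (T s) (Z₂ s) = 0 ∧ mink (T s) (Z₃ s) = 0

/-- `γ` is a smooth time-like curve parametrized by proper time on `I`. -/
def ProperTime (I : Set ℝ) (γ : ℝ → Fin 4 → ℝ) : Prop :=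
  ContDiffOn ℝ (⊤ : ℕ∞) γ I ∧ ∀ s ∈ I, mink (deriv γ s) (deriv γ s) = -1

/-- Three smooth real functions on `I`. -/
def Smooth3 (I : Set ℝ) (x₁ x₂ x₃ : ℝ → ℝ) : Prop :=
  ContDiffOn ℝ (⊤ : ℕ∞) x₁ I ∧ ContDiffOn ℝ (⊤ : ℕ∞) x₂ I ∧ ContDiffOn ℝ (⊤ : ℕ∞) x₃ I

/-- `γ` admits a generalized Bishop frame of type B. -/
def AdmitsB (I : Set ℝ) (γ : ℝ → Fin 4 → ℝ) : Prop :=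
  ∃ (Z₁ Z₂ Z₃ : ℝ → Fin 4 → ℝ) (x₁ x₂ x₃ : ℝ → ℝ),
    OrthFrame I (deriv γ) Z₁ Z₂ Z₃ ∧ Smooth3 I x₁ x₂ x₃ ∧
    ∀ s ∈ I,
      deriv (deriv γ) s = x₁ s • Z₁ s + x₂ s • Z₂ s + x₃ s • Z₃ s ∧
      deriv Z₁ s = x₁ s • deriv γ s ∧
      deriv Z₂ s = x₂ s • deriv γ s ∧
      deriv Z₃ s = x₃ s • deriv γ s

/-- `γ` admits a generalized Bishop frame of type C. -/
def AdmitsC (I : Set ℝ) (γ : ℝ → Fin 4 → ℝ) : Prop :=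
  ∃ (Z₁ Z₂ Z₃ : ℝ → Fin 4 → ℝ) (x₁ x₂ x₃ : ℝ → ℝ),
    OrthFrame I (deriv γ) Z₁ Z₂ Z₃ ∧ Smooth3 I x₁ x₂ x₃ ∧
    ∀ s ∈ I,
      deriv (deriv γ) s = x₁ s • Z₁ s + x₂ s • Z₂ s ∧
      deriv Z₁ s = x₁ s • deriv γ s + x₃ s • Z₃ s ∧
      deriv Z₂ s = x₂ s • deriv γ s ∧
      deriv Z₃ s = (-(x₃ s)) • Z₁ s

/-- `γ` admits a generalized Bishop frame of type D. -/
def AdmitsD (I : Set ℝ) (γ : ℝ → Fin 4 → ℝ) : Prop :=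
  ∃ (Z₁ Z₂ Z₃ : ℝ → Fin 4 → ℝ) (x₁ x₂ x₃ : ℝ → ℝ),
    OrthFrame I (deriv γ) Z₁ Z₂ Z₃ ∧ Smooth3 I x₁ x₂ x₃ ∧
    ∀ s ∈ I,
      deriv (deriv γ) s = x₁ s • Z₁ s ∧
      deriv Z₁ s = x₁ s • deriv γ s + x₂ s • Z₂ s + x₃ s • Z₃ s ∧
      deriv Z₂ s = (-(x₂ s)) • Z₁ s ∧
      deriv Z₃ s = (-(x₃ s)) • Z₁ s

/-- `γ` admits a generalized Bishop frame of type F. -/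
def AdmitsF (I : Set ℝ) (γ : ℝ → Fin 4 → ℝ) : Prop :=
  ∃ (Z₁ Z₂ Z₃ : ℝ → Fin 4 → ℝ) (x₁ x₂ x₃ : ℝ → ℝ),
    OrthFrame I (deriv γ) Z₁ Z₂ Z₃ ∧ Smooth3 I x₁ x₂ x₃ ∧
    ∀ s ∈ I,
      deriv (deriv γ) s = x₁ s • Z₁ s ∧
      deriv Z₁ s = x₁ s • deriv γ s + x₂ s • Z₂ s ∧
      deriv Z₂ s = (-(x₂ s)) • Z₁ s + x₃ s • Z₃ s ∧
      deriv Z₃ s = (-(x₃ s)) • Z₂ s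

open scoped NNReal Topology

theorem IsOpen.exists_Icc_subset_lt_min_max_lt {I : Set ℝ} (hIo : IsOpen I)
    (hIc : I.OrdConnected) {x y : ℝ} (hx : x ∈ I) (hy : y ∈ I) :
    ∃ a b, a < min x y ∧ max x y < b ∧ Icc a b ⊆ I := by
  obtain ⟨a, ha, haI⟩ := Filter.Eventually.exists_lt (hIo.mem_nhds (min_rec' (· ∈ I) hx hy))
  obtain ⟨b, hb, hbI⟩ := Filter.Eventually.exists_gt (hIo.mem_nhds (max_rec' (· ∈ I) hx hy))
  exact ⟨a, b, ha, hb, hIc.out haI hbI⟩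

section LinearODE

variable {E : Type*} [NormedAddCommGroup E] [NormedSpace ℝ E] {A : ℝ → E →L[ℝ] E}
  {I : Set ℝ}

theorem IsIntegralCurveOn.piecewise_Icc {γ₁ γ₂ : ℝ → E} {v : ℝ → E → E} {a b c : ℝ}
    (h₁ : IsIntegralCurveOn γ₁ v (Icc a b)) (h₂ : IsIntegralCurveOn γ₂ v (Icc b c))
    (hb : γ₁ b = γ₂ b) :
    IsIntegralCurveOn (fun t => if t ≤ b then γ₁ t else γ₂ t) v (Icc a c) := by
  set γ : ℝ → E := fun t => if t ≤ b then γ₁ t else γ₂ t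
  have hγ₁ : EqOn γ γ₁ (Icc a b) := fun t ht => if_pos ht.2
  have hγ₂ : EqOn γ γ₂ (Icc b c) := fun t ht => by
    rcases ht.1.eq_or_lt with rfl | hlt
    · exact (if_pos le_rfl).trans hb
    · exact if_neg hlt.not_ge
  -- off a closed set, every derivative within it holds vacuously
  have within : ∀ {s : Set ℝ} {γ' : ℝ → E}, IsClosed s → IsIntegralCurveOn γ' v s →
      EqOn γ γ' s → ∀ t, HasDerivWithinAt γ (v t (γ t)) s t := by
    intro s γ' hs h e t
    by_cases ht : t ∈ s
    · rw [e ht]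
      exact (h t ht).congr e (e ht)
    · rw [hasDerivWithinAt_iff_hasFDerivWithinAt]
      exact HasFDerivWithinAt.of_notMem_closure (by rwa [hs.closure_eq])
  intro t _
  exact ((within isClosed_Icc h₁ hγ₁ t).union (within isClosed_Icc h₂ hγ₂ t)).mono
    Icc_subset_Icc_union_Icc

theorem eqOn_Ioo_of_hasDerivAt_clm_apply {a b : ℝ} (hA : ContinuousOn A (Icc a b))
    {γ₁ γ₂ : ℝ → E} (h₁ : ∀ t ∈ Ioo a b, HasDerivAt γ₁ (A t (γ₁ t)) t)
    (h₂ : ∀ t ∈ Ioo a b, HasDerivAt γ₂ (A t (γ₂ t)) t) {t₀ : ℝ} (ht₀ : t₀ ∈ Ioo a b)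
    (heq : γ₁ t₀ = γ₂ t₀) : EqOn γ₁ γ₂ (Ioo a b) := by
  obtain ⟨C, hC⟩ := isCompact_Icc.exists_bound_of_continuousOn hA
  have hlip : ∀ t ∈ Ioo a b, LipschitzOnWith C.toNNReal (A t) univ := fun t ht =>
    ((A t).lipschitz.weaken (by
      rw [← NNReal.coe_le_coe, coe_nnnorm, Real.coe_toNNReal']
      exact (hC t (Ioo_subset_Icc_self ht)).trans (le_max_left _ _))).lipschitzOnWith
  exact ODE_solution_unique_of_mem_Ioo (v := fun t x => A t x) hlip ht₀
    (fun t ht => ⟨h₁ t ht, mem_univ _⟩) (fun t ht => ⟨h₂ t ht, mem_univ _⟩) heq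

theorem contDiffOn_of_hasDerivAt_clm_apply (hIo : IsOpen I) (hA : ContDiffOn ℝ (⊤ : ℕ∞) A I)
    {γ : ℝ → E} (hγ : ∀ t ∈ I, HasDerivAt γ (A t (γ t)) t) : ContDiffOn ℝ (⊤ : ℕ∞) γ I := by
  refine contDiffOn_infty.2 fun n => ?_
  induction n with
  | zero => exact contDiffOn_zero.2 fun t ht => (hγ t ht).continuousAt.continuousWithinAt
  | succ n ih =>
    rw [Nat.cast_succ, contDiffOn_succ_iff_deriv_of_isOpen hIo]
    refine ⟨fun t ht => (hγ t ht).differentiableAt.differentiableWithinAt, by simp, ?_⟩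
    exact ((hA.of_le (by exact_mod_cast le_top)).clm_apply ih).congr fun t ht => (hγ t ht).deriv

variable [CompleteSpace E]

theorem exists_pos_forall_exists_isIntegralCurveOn_Icc {v : ℝ → E → E} {K : ℝ≥0}
    (hcont : ∀ x, Continuous (v · x)) (hlip : ∀ t, LipschitzWith K (v t))
    (hzero : ∀ t, v t 0 = 0) :
    ∃ ε > 0, ∀ t₀ x₀, ∃ γ, γ t₀ = x₀ ∧ IsIntegralCurveOn γ v (Icc (t₀ - ε) (t₀ + ε)) := by
  refine ⟨(2 * (K + 1))⁻¹, by positivity, fun t₀ x₀ => ?_⟩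
  set ε : ℝ := (2 * (K + 1))⁻¹ with hε
  have hε0 : 0 ≤ ε := by positivity
  have ht₀ : t₀ ∈ Icc (t₀ - ε) (t₀ + ε) := ⟨by linarith, by linarith⟩
  -- on the ball of radius `‖x₀‖ + 1` the field is bounded by `K (2‖x₀‖ + 1)`, and in time `ε`
  -- a solution moves less than `‖x₀‖ + 1`
  have hpl : IsPicardLindelof v (⟨t₀, ht₀⟩ : Icc (t₀ - ε) (t₀ + ε)) x₀
      (‖x₀‖₊ + 1) 0 (K * (2 * ‖x₀‖₊ + 1)) K := by
    refine ⟨fun t _ => (hlip t).lipschitzOnWith, fun x _ => (hcont x).continuousOn,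
      fun t _ x hx => ?_, ?_⟩
    · have hx' : ‖x‖ ≤ 2 * ‖x₀‖ + 1 := by
        have := mem_closedBall_iff_norm.mp hx
        push_cast at this
        linarith [norm_le_norm_add_norm_sub' x x₀]
      have := (hlip t).dist_le_mul x 0
      rw [hzero, dist_zero_right, dist_zero_right] at this
      push_cast
      exact this.trans (by gcongr)
    · push_cast
      rw [sub_zero, add_sub_cancel_left, sub_sub_cancel, max_self, hε]
      have : (0 : ℝ) ≤ K := K.2
      field_simp
      nlinarith [norm_nonneg x₀]
  exact hpl.exists_eq_forall_mem_Icc_hasDerivWithinAt₀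

theorem exists_isIntegralCurveOn_Icc_of_lipschitzWith {v : ℝ → E → E} {K : ℝ≥0}
    (hcont : ∀ x, Continuous (v · x)) (hlip : ∀ t, LipschitzWith K (v t))
    (hzero : ∀ t, v t 0 = 0) (t₀ r : ℝ) (x₀ : E) :
    ∃ γ, γ t₀ = x₀ ∧ IsIntegralCurveOn γ v (Icc (t₀ - r) (t₀ + r)) := by
  obtain ⟨ε, hε, hloc⟩ := exists_pos_forall_exists_isIntegralCurveOn_Icc hcont hlip hzero
  suffices ∀ n : ℕ, ∀ t₀ x₀, ∃ γ, γ t₀ = x₀ ∧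
      IsIntegralCurveOn γ v (Icc (t₀ - n * ε) (t₀ + n * ε)) by
    obtain ⟨n, hn⟩ := exists_nat_ge (r / ε)
    have hr : r ≤ n * ε := (div_le_iff₀ hε).1 hn
    obtain ⟨γ, hγ₀, hγ⟩ := this n t₀ x₀
    exact ⟨γ, hγ₀, hγ.mono (Icc_subset_Icc (by linarith) (by linarith))⟩
  intro n
  induction n with
  | zero =>
    intro t₀ x₀
    obtain ⟨γ, hγ₀, hγ⟩ := hloc t₀ x₀
    exact ⟨γ, hγ₀, hγ.mono (Icc_subset_Icc (by simp [hε.le]) (by simp [hε.le]))⟩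
  | succ n ih =>
    intro t₀ x₀
    obtain ⟨γ, hγ₀, hγ⟩ := ih t₀ x₀
    set p := t₀ - n * ε
    set q := t₀ + n * ε
    have hnε : 0 ≤ n * ε := by positivity
    obtain ⟨γq, hγq₀, hγq⟩ := hloc q (γ q)
    obtain ⟨γp, hγp₀, hγp⟩ := hloc p (γ p)
    have hright := hγ.piecewise_Icc (hγq.mono (Icc_subset_Icc (by linarith) le_rfl)) hγq₀.symm
    have hpq : p ≤ q := by linarith
    have hglued := (hγp.mono (Icc_subset_Icc le_rfl (by linarith))).piecewise_Icc hright
      (by simp [hγp₀, hpq])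
    refine ⟨_, ?_, hglued.mono (Icc_subset_Icc (by push_cast; linarith) (by push_cast; linarith))⟩
    have htq : t₀ ≤ q := by linarith
    by_cases htp : t₀ ≤ p
    · have hp : p = t₀ := le_antisymm (by linarith) htp
      simp only [if_pos htp]
      rw [← hp, hγp₀, hp, hγ₀]
    · simp [htp, htq, hγ₀]

theorem exists_isIntegralCurveOn_Icc_clm_apply {a b : ℝ} (hab : a ≤ b)
    (hA : ContinuousOn A (Icc a b)) {t₀ : ℝ} (ht₀ : t₀ ∈ Icc a b) (x₀ : E) :
    ∃ γ, γ t₀ = x₀ ∧ IsIntegralCurveOn γ (fun t x => A t x) (Icc a b) := by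
  -- freeze the coefficients outside `[a, b]`, which makes them globally bounded
  set B : ℝ → E →L[ℝ] E := IccExtend hab ((Icc a b).domRestrict A)
  have hB : Continuous B := (continuousOn_iff_continuous_domRestrict.1 hA).Icc_extend'
  have hBA : EqOn B A (Icc a b) := fun t ht => IccExtend_of_mem hab _ ht
  obtain ⟨C, hC⟩ := isCompact_Icc.exists_bound_of_continuousOn hA
  have hlip : ∀ t, LipschitzWith C.toNNReal (B t) := fun t =>
    (B t).lipschitz.weaken (by
      rw [← NNReal.coe_le_coe, coe_nnnorm, Real.coe_toNNReal']
      exact (hC _ (projIcc a b hab t).2).trans (le_max_left _ _))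
  obtain ⟨γ, hγ₀, hγ⟩ := exists_isIntegralCurveOn_Icc_of_lipschitzWith (v := fun t x => B t x)
    (fun x => hB.clm_apply continuous_const) hlip (fun t => map_zero _) t₀ (b - a) x₀
  have hsub : Icc a b ⊆ Icc (t₀ - (b - a)) (t₀ + (b - a)) :=
    Icc_subset_Icc (by linarith [ht₀.2]) (by linarith [ht₀.1])
  refine ⟨γ, hγ₀, fun t ht => ?_⟩
  show HasDerivWithinAt γ (A t (γ t)) _ _
  rw [← hBA ht]
  exact (hγ t (hsub ht)).mono hsub

theorem exists_hasDerivAt_clm_apply (hIo : IsOpen I) (hIc : I.OrdConnected)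
    (hA : ContinuousOn A I) {s₀ : ℝ} (hs₀ : s₀ ∈ I) (x₀ : E) :
    ∃ γ, γ s₀ = x₀ ∧ ∀ t ∈ I, HasDerivAt γ (A t (γ t)) t := by
  have hloc : ∀ s ∈ I, ∃ a b, s ∈ Ioo a b ∧ s₀ ∈ Ioo a b ∧ Icc a b ⊆ I ∧
      ∃ γ : ℝ → E, γ s₀ = x₀ ∧ ∀ t ∈ Ioo a b, HasDerivAt γ (A t (γ t)) t := by
    intro s hs
    obtain ⟨a, b, ha, hb, hsub⟩ := hIo.exists_Icc_subset_lt_min_max_lt hIc hs hs₀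
    have hsab : s ∈ Ioo a b := ⟨(min_le_left _ _).trans_lt' ha, (le_max_left _ _).trans_lt hb⟩
    have hs₀ab : s₀ ∈ Ioo a b :=
      ⟨(min_le_right _ _).trans_lt' ha, (le_max_right _ _).trans_lt hb⟩
    obtain ⟨γ, hγ₀, hγ⟩ := exists_isIntegralCurveOn_Icc_clm_apply (hsab.1.trans hsab.2).le
      (hA.mono hsub) (Ioo_subset_Icc_self hs₀ab) x₀
    exact ⟨a, b, hsab, hs₀ab, hsub, γ, hγ₀, fun t ht =>
      (hγ t (Ioo_subset_Icc_self ht)).hasDerivAt (Icc_mem_nhds ht.1 ht.2)⟩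
  choose! a b hmem hs₀mem hsub γ hγ₀ hγ using hloc
  refine ⟨fun s => γ s s, hγ₀ s₀ hs₀, fun s hs => ?_⟩
  -- the local solutions agree on overlaps, by uniqueness from the common value at `s₀`
  have hagree : ∀ u ∈ Ioo (a s) (b s) ∩ I, γ u u = γ s u := by
    rintro u ⟨hu, huI⟩
    have hsub₁ : Ioo (max (a s) (a u)) (min (b s) (b u)) ⊆ Ioo (a u) (b u) :=
      Ioo_subset_Ioo (le_max_right _ _) (min_le_right _ _)
    have hsub₂ : Ioo (max (a s) (a u)) (min (b s) (b u)) ⊆ Ioo (a s) (b s) :=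
      Ioo_subset_Ioo (le_max_left _ _) (min_le_left _ _)
    refine eqOn_Ioo_of_hasDerivAt_clm_apply
      (hA.mono ((Icc_subset_Icc (le_max_left _ _) (min_le_left _ _)).trans (hsub s hs)))
      (fun t ht => hγ u huI t (hsub₁ ht)) (fun t ht => hγ s hs t (hsub₂ ht))
      (t₀ := s₀) ⟨max_lt (hs₀mem s hs).1 (hs₀mem u huI).1, lt_min (hs₀mem s hs).2 (hs₀mem u huI).2⟩
      ((hγ₀ u huI).trans (hγ₀ s hs).symm) ⟨max_lt hu.1 (hmem u huI).1, lt_min hu.2 (hmem u huI).2⟩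
  exact (hγ s hs s (hmem s hs)).congr_of_eventuallyEq
    (Filter.eventually_of_mem (Filter.inter_mem (Ioo_mem_nhds (hmem s hs).1 (hmem s hs).2)
      (hIo.mem_nhds hs)) hagree)

end LinearODE

section Minkowski

def minkForm : LinearMap.BilinForm ℝ (Fin 4 → ℝ) :=
  LinearMap.mk₂ ℝ mink (fun _ _ _ => by simp only [mink, Pi.add_apply]; ring)
    (fun _ _ _ => by simp only [mink, Pi.smul_apply, smul_eq_mul]; ring)
    (fun _ _ _ => by simp only [mink, Pi.add_apply]; ring)
    (fun _ _ _ => by simp only [mink, Pi.smul_apply, smul_eq_mul]; ring)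

@[simp] theorem minkForm_apply (x y : Fin 4 → ℝ) : minkForm x y = mink x y := rfl

theorem mink_comm (x y : Fin 4 → ℝ) : mink x y = mink y x := by
  simp only [mink]; ring

@[simp] theorem mink_smul_left (c : ℝ) (x y : Fin 4 → ℝ) : mink (c • x) y = c * mink x y :=
  minkForm.map_smul₂ c x y

@[simp] theorem mink_smul_right (c : ℝ) (x y : Fin 4 → ℝ) : mink x (c • y) = c * mink x y :=
  (minkForm x).map_smul c y

@[simp] theorem mink_sub_left (x y z : Fin 4 → ℝ) : mink (x - y) z = mink x z - mink y z :=
  minkForm.map_sub₂ x y z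

@[simp] theorem mink_sub_right (x y z : Fin 4 → ℝ) : mink x (y - z) = mink x y - mink x z :=
  (minkForm x).map_sub y z

def minkCLM : (Fin 4 → ℝ) →L[ℝ] StrongDual ℝ (Fin 4 → ℝ) :=
  LinearMap.toContinuousLinearMap (LinearMap.toContinuousLinearMap.toLinearMap ∘ₗ minkForm)

@[simp] theorem minkCLM_apply (x y : Fin 4 → ℝ) : minkCLM x y = mink x y := rfl

theorem HasDerivAt.mink {f g : ℝ → Fin 4 → ℝ} {f' g' : Fin 4 → ℝ} {s : ℝ}
    (hf : HasDerivAt f f' s) (hg : HasDerivAt g g' s) :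
    HasDerivAt (fun t => mink (f t) (g t)) (mink f' (g s) + mink (f s) g') s :=
  (minkCLM.hasFDerivAt.comp_hasDerivAt s hf).clm_apply hg

theorem ContDiffOn.mink {n : WithTop ℕ∞} {f g : ℝ → Fin 4 → ℝ} {s : Set ℝ}
    (hf : ContDiffOn ℝ n f s) (hg : ContDiffOn ℝ n g s) :
    ContDiffOn ℝ n (fun t => mink (f t) (g t)) s :=
  (minkCLM.contDiff.comp_contDiffOn hf).clm_apply hg

theorem mink_add_mink_eq_zero_of_eqOn {f g : ℝ → Fin 4 → ℝ} {f' g' : Fin 4 → ℝ} {s c : ℝ}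
    {I : Set ℝ} (hI : I ∈ 𝓝 s) (hf : HasDerivAt f f' s) (hg : HasDerivAt g g' s)
    (hc : ∀ t ∈ I, mink (f t) (g t) = c) : mink f' (g s) + mink (f s) g' = 0 :=
  (hf.mink hg).unique
    ((hasDerivAt_const s c).congr_of_eventuallyEq (Filter.eventually_of_mem hI hc))

theorem mink_self_pos_of_mink_eq_zero {T v : Fin 4 → ℝ} (hT : mink T T = -1)
    (hvT : mink v T = 0) (hv : v ≠ 0) : 0 < mink v v := by
  simp only [mink] at hT hvT ⊢
  have hT0 : T 0 ≠ 0 := fun h => by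
    rw [h] at hT; nlinarith [sq_nonneg (T 1), sq_nonneg (T 2), sq_nonneg (T 3)]
  have hspace : 0 < v 1 * v 1 + v 2 * v 2 + v 3 * v 3 := by
    by_contra! h
    have h1 : v 1 = 0 := by nlinarith [sq_nonneg (v 1), sq_nonneg (v 2), sq_nonneg (v 3)]
    have h2 : v 2 = 0 := by nlinarith [sq_nonneg (v 1), sq_nonneg (v 2), sq_nonneg (v 3)]
    have h3 : v 3 = 0 := by nlinarith [sq_nonneg (v 1), sq_nonneg (v 2), sq_nonneg (v 3)]
    have h0 : v 0 = 0 := by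
      rw [h1, h2, h3] at hvT
      exact (mul_eq_zero.1 (by linarith)).resolve_right hT0
    exact hv (funext fun i => by fin_cases i <;> assumption)
  -- Lagrange's identity, after eliminating `v 0 * T 0` by `hvT`
  have key : (-(v 0 * v 0) + v 1 * v 1 + v 2 * v 2 + v 3 * v 3) * (T 0 * T 0)
      = (v 1 * v 1 + v 2 * v 2 + v 3 * v 3)
        + ((v 1 * T 2 - v 2 * T 1) ^ 2 + (v 1 * T 3 - v 3 * T 1) ^ 2
          + (v 2 * T 3 - v 3 * T 2) ^ 2) := by
    linear_combination (v 0 * T 0 + (v 1 * T 1 + v 2 * T 2 + v 3 * T 3)) * hvT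
      - (v 1 * v 1 + v 2 * v 2 + v 3 * v 3) * hT
  nlinarith [mul_self_pos.2 hT0, sq_nonneg (v 1 * T 2 - v 2 * T 1),
    sq_nonneg (v 1 * T 3 - v 3 * T 1), sq_nonneg (v 2 * T 3 - v 3 * T 2)]

theorem exists_ne_zero_mink_eq_zero (a b c : Fin 4 → ℝ) :
    ∃ u ≠ 0, mink u a = 0 ∧ mink u b = 0 ∧ mink u c = 0 := by
  set L : (Fin 4 → ℝ) →ₗ[ℝ] (Fin 3 → ℝ) :=
    LinearMap.pi ![minkForm.flip a, minkForm.flip b, minkForm.flip c]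
  have hker : LinearMap.ker L ≠ ⊥ := fun h => by
    have := LinearMap.finrank_le_finrank_of_injective (LinearMap.ker_eq_bot.1 h)
    simp at this
  obtain ⟨u, hu, hu0⟩ := Submodule.exists_mem_ne_zero_of_ne_bot hker
  have hL : ∀ i, L u i = 0 := fun i => congrFun (LinearMap.mem_ker.1 hu) i
  exact ⟨u, hu0, hL 0, hL 1, hL 2⟩

theorem mink_inv_sqrt_smul_self {u : Fin 4 → ℝ} (hu : 0 < mink u u) :
    mink ((√(mink u u))⁻¹ • u) ((√(mink u u))⁻¹ • u) = 1 := by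
  simp only [mink_smul_left, mink_smul_right, ← mul_assoc, ← mul_inv, mul_self_sqrt hu.le]
  exact inv_mul_cancel₀ hu.ne'

theorem exists_mink_self_eq_one_of_timelike {T : Fin 4 → ℝ} (hT : mink T T = -1)
    (a b : Fin 4 → ℝ) :
    ∃ Y, mink Y Y = 1 ∧ mink T Y = 0 ∧ mink a Y = 0 ∧ mink b Y = 0 := by
  obtain ⟨u, hu0, huT, hua, hub⟩ := exists_ne_zero_mink_eq_zero T a b
  have hpos := mink_self_pos_of_mink_eq_zero hT huT hu0
  refine ⟨(√(mink u u))⁻¹ • u, mink_inv_sqrt_smul_self hpos, ?_, ?_, ?_⟩ <;>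
    simp [mink_comm _ u, huT, hua, hub]

theorem LinearMap.BilinForm.eq_sum_of_iIsOrtho {K V ι : Type*} [Field K] [AddCommGroup V]
    [Module K V] [FiniteDimensional K V] [Fintype ι] {B : LinearMap.BilinForm K V} {e : ι → V}
    (ho : B.iIsOrtho e) (hne : ∀ i, B (e i) (e i) ≠ 0)
    (hcard : Fintype.card ι = Module.finrank K V) (v : V) :
    v = ∑ i, (B v (e i) / B (e i) (e i)) • e i := by
  classical
  set b := basisOfLinearIndependentOfCardEqFinrank' e
    (LinearMap.BilinForm.linearIndependent_of_iIsOrtho ho hne) hcard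
  have hcoord : ∀ i, B v (e i) = b.repr v i * B (e i) (e i) := fun i => by
    conv_lhs => rw [← b.sum_repr v]
    rw [LinearMap.BilinForm.sum_left, Finset.sum_eq_single i]
    · simp [b]
    · intro j _ hji
      simp [b, ho hji]
    · simp
  conv_lhs => rw [← b.sum_repr v]
  simp [b, hcoord, hne]

theorem mink_expansion {T Z₁ Z₂ Z₃ : Fin 4 → ℝ} (hTT : mink T T = -1) (h11 : mink Z₁ Z₁ = 1)
    (h22 : mink Z₂ Z₂ = 1) (h33 : mink Z₃ Z₃ = 1) (h12 : mink Z₁ Z₂ = 0)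
    (h13 : mink Z₁ Z₃ = 0) (h23 : mink Z₂ Z₃ = 0) (hT1 : mink T Z₁ = 0) (hT2 : mink T Z₂ = 0)
    (hT3 : mink T Z₃ = 0) (v : Fin 4 → ℝ) :
    v = (-mink v T) • T + mink v Z₁ • Z₁ + mink v Z₂ • Z₂ + mink v Z₃ • Z₃ := by
  have ho : minkForm.iIsOrtho ![T, Z₁, Z₂, Z₃] := by
    intro i j hij
    fin_cases i <;> fin_cases j <;> simp_all [Function.onFun, mink_comm]
  have h := LinearMap.BilinForm.eq_sum_of_iIsOrtho ho
    (by intro i; fin_cases i <;> simp [hTT, h11, h22, h33]) (by simp) v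
  simpa [Fin.sum_univ_four, hTT, h11, h22, h33, div_neg] using h

end Minkowski

section Frames

variable {I : Set ℝ}

def minkWedge (u w : Fin 4 → ℝ) : (Fin 4 → ℝ) →L[ℝ] (Fin 4 → ℝ) :=
  (minkCLM u).smulRight w - (minkCLM w).smulRight u

@[simp] theorem minkWedge_apply (u w x : Fin 4 → ℝ) :
    minkWedge u w x = mink u x • w - mink w x • u := rfl

theorem mink_minkWedge_apply (u w x y : Fin 4 → ℝ) :
    mink (minkWedge u w x) y = -mink x (minkWedge u w y) := by
  simp only [minkWedge_apply, mink_sub_left, mink_sub_right, mink_smul_left, mink_smul_right]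
  rw [mink_comm x u, mink_comm x w]
  ring

theorem mink_eq_of_hasDerivAt_skew (hIo : IsOpen I) (hIc : I.OrdConnected)
    {A : ℝ → (Fin 4 → ℝ) →L[ℝ] (Fin 4 → ℝ)}
    (hskew : ∀ t ∈ I, ∀ x y, mink (A t x) y = -mink x (A t y)) {X Y : ℝ → Fin 4 → ℝ}
    (hX : ∀ t ∈ I, HasDerivAt X (A t (X t)) t) (hY : ∀ t ∈ I, HasDerivAt Y (A t (Y t)) t)
    {s t : ℝ} (hs : s ∈ I) (ht : t ∈ I) : mink (X s) (Y s) = mink (X t) (Y t) :=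
  hIo.is_const_of_deriv_eq_zero hIc.isPreconnected
    (fun u hu => ((hX u hu).mink (hY u hu)).differentiableAt.differentiableWithinAt)
    (fun u hu => by rw [((hX u hu).mink (hY u hu)).deriv, hskew u hu, neg_add_cancel]; rfl)
    hs ht

theorem ProperTime.contDiffOn_deriv {γ : ℝ → Fin 4 → ℝ} (hγ : ProperTime I γ)
    (hIo : IsOpen I) : ContDiffOn ℝ (⊤ : ℕ∞) (deriv γ) I :=
  hγ.1.deriv_of_isOpen hIo le_rfl

theorem ProperTime.exists_unit_normal {γ : ℝ → Fin 4 → ℝ} (hγ : ProperTime I γ) (hIo : IsOpen I)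
    (h2reg : ∀ s ∈ I, deriv (deriv γ) s ≠ 0) :
    ∃ (κ : ℝ → ℝ) (Z₁ : ℝ → Fin 4 → ℝ), ContDiffOn ℝ (⊤ : ℕ∞) κ I ∧
      ContDiffOn ℝ (⊤ : ℕ∞) Z₁ I ∧ ∀ s ∈ I, deriv (deriv γ) s = κ s • Z₁ s ∧
        mink (Z₁ s) (Z₁ s) = 1 ∧ mink (deriv γ s) (Z₁ s) = 0 := by
  set T := deriv γ
  have hTs := hγ.contDiffOn_deriv hIo
  have hAT : ∀ s ∈ I, mink (T s) (deriv T s) = 0 := fun s hs => by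
    have hTd := ((hTs.differentiableOn (by simp)).differentiableAt (hIo.mem_nhds hs)).hasDerivAt
    have := mink_add_mink_eq_zero_of_eqOn (hIo.mem_nhds hs) hTd hTd hγ.2
    rw [mink_comm] at this
    linarith
  have hpos : ∀ s ∈ I, 0 < mink (deriv T s) (deriv T s) := fun s hs =>
    mink_self_pos_of_mink_eq_zero (hγ.2 s hs) ((mink_comm _ _).trans (hAT s hs)) (h2reg s hs)
  have hAs : ContDiffOn ℝ (⊤ : ℕ∞) (deriv T) I := hTs.deriv_of_isOpen hIo le_rfl
  have hκ : ContDiffOn ℝ (⊤ : ℕ∞) (fun s => √(mink (deriv T s) (deriv T s))) I :=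
    (hAs.mink hAs).sqrt fun s hs => (hpos s hs).ne'
  refine ⟨_, fun s => (√(mink (deriv T s) (deriv T s)))⁻¹ • deriv T s, hκ,
    (hκ.inv fun s hs => (sqrt_pos.2 (hpos s hs)).ne').smul hAs,
    fun s hs => ⟨?_, mink_inv_sqrt_smul_self (hpos s hs), ?_⟩⟩
  · rw [smul_smul, mul_inv_cancel₀ (sqrt_pos.2 (hpos s hs)).ne', one_smul]
  · rw [mink_smul_right, hAT s hs, mul_zero]

theorem exists_orthFrame_of_hasDerivAt_skew (hIo : IsOpen I) (hIc : I.OrdConnected)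
    {A : ℝ → (Fin 4 → ℝ) →L[ℝ] (Fin 4 → ℝ)} (hA : ContDiffOn ℝ (⊤ : ℕ∞) A I)
    (hskew : ∀ t ∈ I, ∀ x y, mink (A t x) y = -mink x (A t y)) {T Z₁ : ℝ → Fin 4 → ℝ}
    (hT : ∀ t ∈ I, HasDerivAt T (A t (T t)) t) (hZ₁ : ∀ t ∈ I, HasDerivAt Z₁ (A t (Z₁ t)) t)
    {s₀ : ℝ} (hs₀ : s₀ ∈ I) (hTT : mink (T s₀) (T s₀) = -1) (h11 : mink (Z₁ s₀) (Z₁ s₀) = 1)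
    (hT1 : mink (T s₀) (Z₁ s₀) = 0) :
    ∃ Z₂ Z₃ : ℝ → Fin 4 → ℝ, OrthFrame I T Z₁ Z₂ Z₃ ∧
      (∀ t ∈ I, HasDerivAt Z₂ (A t (Z₂ t)) t) ∧ ∀ t ∈ I, HasDerivAt Z₃ (A t (Z₃ t)) t := by
  obtain ⟨Y₂, h22, hT2, h12, -⟩ := exists_mink_self_eq_one_of_timelike hTT (Z₁ s₀) (Z₁ s₀)
  obtain ⟨Y₃, h33, hT3, h13, h23⟩ := exists_mink_self_eq_one_of_timelike hTT (Z₁ s₀) Y₂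
  obtain ⟨Z₂, rfl, hZ₂⟩ := exists_hasDerivAt_clm_apply hIo hIc hA.continuousOn hs₀ Y₂
  obtain ⟨Z₃, rfl, hZ₃⟩ := exists_hasDerivAt_clm_apply hIo hIc hA.continuousOn hs₀ Y₃
  refine ⟨Z₂, Z₃, ⟨contDiffOn_of_hasDerivAt_clm_apply hIo hA hZ₁,
    contDiffOn_of_hasDerivAt_clm_apply hIo hA hZ₂, contDiffOn_of_hasDerivAt_clm_apply hIo hA hZ₃,
    fun s hs => ?_⟩, hZ₂, hZ₃⟩
  have gram := fun {X Y : ℝ → Fin 4 → ℝ} (hX : ∀ t ∈ I, HasDerivAt X (A t (X t)) t)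
    (hY : ∀ t ∈ I, HasDerivAt Y (A t (Y t)) t) =>
    mink_eq_of_hasDerivAt_skew hIo hIc hskew hX hY hs hs₀
  exact ⟨(gram hZ₁ hZ₁).trans h11, (gram hZ₂ hZ₂).trans h22, (gram hZ₃ hZ₃).trans h33,
    (gram hZ₁ hZ₂).trans h12, (gram hZ₁ hZ₃).trans h13, (gram hZ₂ hZ₃).trans h23,
    (gram hT hZ₁).trans hT1, (gram hT hZ₂).trans hT2, (gram hT hZ₃).trans hT3⟩

theorem mink_deriv_of_unit_normal (hIo : IsOpen I) {T Z₁ : ℝ → Fin 4 → ℝ} {κ : ℝ → ℝ}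
    (hT : DifferentiableOn ℝ T I) (hZ₁ : DifferentiableOn ℝ Z₁ I)
    (hN : ∀ s ∈ I, deriv T s = κ s • Z₁ s ∧ mink (Z₁ s) (Z₁ s) = 1 ∧ mink (T s) (Z₁ s) = 0)
    {s : ℝ} (hs : s ∈ I) : mink (deriv Z₁ s) (Z₁ s) = 0 ∧ mink (deriv Z₁ s) (T s) = -κ s := by
  have hTd := (hT.differentiableAt (hIo.mem_nhds hs)).hasDerivAt
  have hZd := (hZ₁.differentiableAt (hIo.mem_nhds hs)).hasDerivAt
  have h11 := mink_add_mink_eq_zero_of_eqOn (hIo.mem_nhds hs) hZd hZd fun t ht => (hN t ht).2.1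
  have hT1 := mink_add_mink_eq_zero_of_eqOn (hIo.mem_nhds hs) hTd hZd fun t ht => (hN t ht).2.2
  rw [mink_comm (Z₁ s)] at h11
  rw [(hN s hs).1, mink_smul_left, (hN s hs).2.1, mink_comm (T s)] at hT1
  constructor <;> linarith

theorem exists_bishopD_of_unit_normal (hIo : IsOpen I) (hIc : I.OrdConnected)
    {T Z₁ : ℝ → Fin 4 → ℝ} {κ : ℝ → ℝ} (hTs : ContDiffOn ℝ (⊤ : ℕ∞) T I)
    (hZ₁s : ContDiffOn ℝ (⊤ : ℕ∞) Z₁ I) (hTT : ∀ s ∈ I, mink (T s) (T s) = -1)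
    (hZ₁ : ∀ s ∈ I, deriv T s = κ s • Z₁ s ∧ mink (Z₁ s) (Z₁ s) = 1 ∧ mink (T s) (Z₁ s) = 0)
    {s₀ : ℝ} (hs₀ : s₀ ∈ I) :
    ∃ (Z₂ Z₃ : ℝ → Fin 4 → ℝ) (x₂ x₃ : ℝ → ℝ), OrthFrame I T Z₁ Z₂ Z₃ ∧
      ContDiffOn ℝ (⊤ : ℕ∞) x₂ I ∧ ContDiffOn ℝ (⊤ : ℕ∞) x₃ I ∧ ∀ s ∈ I,
        deriv Z₁ s = κ s • T s + x₂ s • Z₂ s + x₃ s • Z₃ s ∧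
        deriv Z₂ s = (-(x₂ s)) • Z₁ s ∧ deriv Z₃ s = (-(x₃ s)) • Z₁ s := by
  set W := deriv Z₁
  have hWs : ContDiffOn ℝ (⊤ : ℕ∞) W I := hZ₁s.deriv_of_isOpen hIo le_rfl
  have hTdiff : DifferentiableOn ℝ T I := hTs.differentiableOn (by simp)
  have hZ₁diff : DifferentiableOn ℝ Z₁ I := hZ₁s.differentiableOn (by simp)
  have hTd : ∀ s ∈ I, HasDerivAt T (κ s • Z₁ s) s := fun s hs =>
    (hZ₁ s hs).1 ▸ (hTdiff.differentiableAt (hIo.mem_nhds hs)).hasDerivAt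
  have hZ₁d : ∀ s ∈ I, HasDerivAt Z₁ (W s) s := fun s hs =>
    (hZ₁diff.differentiableAt (hIo.mem_nhds hs)).hasDerivAt
  have hW : ∀ s ∈ I, mink (W s) (Z₁ s) = 0 ∧ mink (W s) (T s) = -κ s := fun s hs =>
    mink_deriv_of_unit_normal hIo hTdiff hZ₁diff hZ₁ hs
  set A := fun t => minkWedge (Z₁ t) (W t)
  have hA : ContDiffOn ℝ (⊤ : ℕ∞) A I :=
    ((minkCLM.contDiff.comp_contDiffOn hZ₁s).smulRight hWs).sub
      ((minkCLM.contDiff.comp_contDiffOn hWs).smulRight hZ₁s)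
  have hTsol : ∀ t ∈ I, HasDerivAt T (A t (T t)) t := fun t ht => by
    convert hTd t ht using 1
    simp [A, mink_comm (Z₁ t), (hZ₁ t ht).2.2, (hW t ht).2]
  have hZ₁sol : ∀ t ∈ I, HasDerivAt Z₁ (A t (Z₁ t)) t := fun t ht => by
    convert hZ₁d t ht using 1
    simp [A, (hZ₁ t ht).2.1, (hW t ht).1]
  obtain ⟨Z₂, Z₃, hframe, hZ₂, hZ₃⟩ := exists_orthFrame_of_hasDerivAt_skew hIo hIc hA
    (fun _ _ => mink_minkWedge_apply _ _) hTsol hZ₁sol hs₀ (hTT s₀ hs₀) (hZ₁ s₀ hs₀).2.1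
    (hZ₁ s₀ hs₀).2.2
  refine ⟨Z₂, Z₃, fun s => mink (W s) (Z₂ s), fun s => mink (W s) (Z₃ s), hframe,
    hWs.mink hframe.2.1, hWs.mink hframe.2.2.1, fun s hs => ?_⟩
  obtain ⟨h11, h22, h33, h12, h13, h23, hT1, hT2, hT3⟩ := hframe.2.2.2 s hs
  refine ⟨?_, ?_, ?_⟩
  · rw [mink_expansion (hTT s hs) h11 h22 h33 h12 h13 h23 hT1 hT2 hT3 (W s), (hW s hs).2,
      (hW s hs).1]
    simp
  · rw [(hZ₂ s hs).deriv]
    simp [A, h12, neg_smul]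
  · rw [(hZ₃ s hs).deriv]
    simp [A, h13, neg_smul]

end Frames

/-- every 2-regular time-like curve parametrized by proper time admits a
generalized Bishop frame of type D. -/
theorem stmt_10 (I : Set ℝ) (hIopen : IsOpen I) (hIconn : I.OrdConnected)
    (γ : ℝ → Fin 4 → ℝ) (hγ : ProperTime I γ)
    (h2reg : ∀ s ∈ I, deriv (deriv γ) s ≠ 0) :
    AdmitsD I γ := by
  rcases I.eq_empty_or_nonempty with rfl | ⟨s₀, hs₀⟩
  · exact ⟨0, 0, 0, 0, 0, 0, by simp [OrthFrame], by simp [Smooth3], by simp⟩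
  obtain ⟨κ, Z₁, hκ, hZ₁s, hZ₁⟩ := hγ.exists_unit_normal hIopen h2reg
  obtain ⟨Z₂, Z₃, x₂, x₃, hframe, hx₂, hx₃, hderiv⟩ := exists_bishopD_of_unit_normal hIopen
    hIconn (hγ.contDiffOn_deriv hIopen) hZ₁s hγ.2 hZ₁ hs₀
  exact ⟨Z₁, Z₂, Z₃, κ, x₂, x₃, hframe, ⟨hκ, hx₂, hx₃⟩, fun s hs => ⟨(hZ₁ s hs).1, hderiv s hs⟩⟩
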